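/- arXiv:math/0310029 — 5 statements merged into one kernel-verified Lean document; each statement's English description precedes it below -/
import Mathlib

section
/- The Pfaffian of the 2μ×2μ skew-symmetric 'checkerboard' matrix A with entries A_{ij} = sign(j−i) when j−i is odd and A_{ij} = 0 when j−i is even equals 2^{μ−1} for every μ ≥ 1. -/
open MvPolynomial

/-- Permutations giving a canonical perfect matching: σ(2i) < σ(2i+1) and σ(2i) increasing. -/
def pfPerms (μ : ℕ) : Finset (Equiv.Perm (Fin (2*μ))) :=
  Finset.univ.filter fun σ =>
    (∀ i : Fin μ, σ ⟨2*i.1, by have := i.2; omega⟩ < σ ⟨2*i.1+1, by have := i.2; omega⟩) ∧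
    (∀ i j : Fin μ, i < j →
      σ ⟨2*i.1, by have := i.2; omega⟩ < σ ⟨2*j.1, by have := j.2; omega⟩)


/-- The Pfaffian of a `2μ × 2μ` matrix (intended for skew-symmetric matrices). -/
def pfaffian {R : Type*} [CommRing R] {μ : ℕ} (A : Matrix (Fin (2*μ)) (Fin (2*μ)) R) : R :=
  ∑ σ ∈ pfPerms μ, (Equiv.Perm.sign σ : ℤ) •
    ∏ i : Fin μ, A (σ ⟨2*i.1, by have := i.2; omega⟩) (σ ⟨2*i.1+1, by have := i.2; omega⟩)


/-- The `2μ × 2μ` checkerboard matrix: entry `sign (j−i)` when `j−i` is odd, `0` when `j−i`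
is even. -/
def checkerboard (μ : ℕ) : Matrix (Fin (2*μ)) (Fin (2*μ)) ℤ :=
  fun i j => if Odd (i.1 + j.1) then (if i.1 < j.1 then 1 else -1) else 0

/-!
Only the terms of the Pfaffian whose pairs all join an even and an odd index survive, and such a
term is determined by the permutation `π` with pairs `{2 j, 2 π j + 1}`. Sorting the pairs
permutes even and odd indices alike, and ordering a pair also negates its entry by
skew-symmetry, so neither changes the sign of the term: it is `sign π * ∏ j, B j (π j)` with
`B i j = A (2 i) (2 j + 1)`, and `Pf A = det B`. For the checkerboard, `B i j` is `1` for `i ≤ j`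
and `-1` otherwise; subtracting from each column its left neighbour makes `B` lower triangular
with diagonal `1, 2, …, 2`.
-/

namespace Pfaffian

open Equiv
open scoped Matrix

variable {μ : ℕ}

def evenIdx (i : Fin μ) : Fin (2 * μ) := ⟨2 * i.1, by omega⟩

def oddIdx (i : Fin μ) : Fin (2 * μ) := ⟨2 * i.1 + 1, by omega⟩

lemma evenIdx_or_oddIdx (x : Fin (2 * μ)) : ∃ i : Fin μ, x = evenIdx i ∨ x = oddIdx i :=
  ⟨⟨x.1 / 2, by omega⟩, by
    rcases Nat.even_or_odd' x.1 with ⟨k, hk | hk⟩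
    · exact .inl (Fin.ext (by simp only [evenIdx]; omega))
    · exact .inr (Fin.ext (by simp only [oddIdx]; omega))⟩

lemma pfaffian_eq_sum {R : Type*} [CommRing R] (A : Matrix (Fin (2 * μ)) (Fin (2 * μ)) R) :
    pfaffian A =
      ∑ σ ∈ pfPerms μ, (Perm.sign σ : ℤ) • ∏ i, A (σ (evenIdx i)) (σ (oddIdx i)) :=
  rfl

lemma mem_pfPerms {σ : Perm (Fin (2 * μ))} :
    σ ∈ pfPerms μ ↔ (∀ i, σ (evenIdx i) < σ (oddIdx i)) ∧
      ∀ i j, i < j → σ (evenIdx i) < σ (evenIdx j) := by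
  simp only [pfPerms, Finset.mem_filter, Finset.mem_univ, true_and]
  rfl

def pairEquiv (μ : ℕ) : Fin μ × Fin 2 ≃ Fin (2 * μ) :=
  finProdFinEquiv.trans (finCongr (Nat.mul_comm μ 2))

lemma pairEquiv_zero (i : Fin μ) : pairEquiv μ (i, 0) = evenIdx i := by
  ext; simp [pairEquiv, evenIdx]

lemma pairEquiv_one (i : Fin μ) : pairEquiv μ (i, 1) = oddIdx i := by
  ext; simp [pairEquiv, oddIdx]; omega

/-- Pair `i` is sent to `{2 α i, 2 β i + 1}`, in this order unless `ε i`. -/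
def pairingPerm (ε : Fin μ → Bool) (α β : Perm (Fin μ)) : Perm (Fin (2 * μ)) :=
  (pairEquiv μ).permCongr
    (prodCongrLeft (fun r : Fin 2 => if r = 0 then α else β) *
      prodCongrRight (fun i => if ε i then swap 0 1 else 1))

section PairingPerm

variable (ε : Fin μ → Bool) (α β : Perm (Fin μ)) (i : Fin μ)

lemma pairingPerm_evenIdx :
    pairingPerm ε α β (evenIdx i) = if ε i then oddIdx (β i) else evenIdx (α i) := by
  rw [pairingPerm, permCongr_apply, ← pairEquiv_zero, symm_apply_apply, Perm.mul_apply]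
  by_cases h : ε i <;> simp [h, pairEquiv_zero, pairEquiv_one]

lemma pairingPerm_oddIdx :
    pairingPerm ε α β (oddIdx i) = if ε i then evenIdx (α i) else oddIdx (β i) := by
  rw [pairingPerm, permCongr_apply, ← pairEquiv_one, symm_apply_apply, Perm.mul_apply]
  by_cases h : ε i <;> simp [h, pairEquiv_zero, pairEquiv_one]

lemma sign_pairingPerm :
    Perm.sign (pairingPerm ε α β) =
      Perm.sign α * Perm.sign β * ∏ i, if ε i then -1 else 1 := by
  rw [pairingPerm, Perm.sign_permCongr, Perm.sign_mul, Perm.sign_prodCongrLeft,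
    Perm.sign_prodCongrRight, Fin.prod_univ_two]
  congr 2 with i
  cases ε i <;> simp

lemma sign_smul_prod_pairingPerm {R : Type*} [CommRing R]
    {A : Matrix (Fin (2 * μ)) (Fin (2 * μ)) R} (hA : Aᵀ = -A) :
    Perm.sign (pairingPerm ε α β) •
        ∏ i, A (pairingPerm ε α β (evenIdx i)) (pairingPerm ε α β (oddIdx i)) =
      (Perm.sign α * Perm.sign β) • ∏ i, A (evenIdx (α i)) (oddIdx (β i)) := by
  rw [sign_pairingPerm]
  set s : Fin μ → ℤˣ := fun i => if ε i then -1 else 1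
  have hentry : ∀ i, A (pairingPerm ε α β (evenIdx i)) (pairingPerm ε α β (oddIdx i)) =
      s i • A (evenIdx (α i)) (oddIdx (β i)) := by
    intro i
    have hskew : A (oddIdx (β i)) (evenIdx (α i)) = -A (evenIdx (α i)) (oddIdx (β i)) :=
      congrFun (congrFun hA _) _
    rw [pairingPerm_evenIdx, pairingPerm_oddIdx]
    by_cases h : ε i <;> simp [s, h, hskew]
  rw [Finset.prod_congr rfl fun i _ => hentry i, Finset.prod_smul, smul_smul, mul_assoc,
    ← Finset.prod_mul_distrib, Finset.prod_eq_one fun i _ => Int.units_mul_self (s i), mul_one]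

def orderedPairingPerm (α β : Perm (Fin μ)) : Perm (Fin (2 * μ)) :=
  pairingPerm (fun i => decide (β i < α i)) α β

lemma val_orderedPairingPerm_evenIdx :
    (orderedPairingPerm α β (evenIdx i)).1 = min (2 * (α i).1) (2 * (β i).1 + 1) := by
  rw [orderedPairingPerm, pairingPerm_evenIdx]
  split_ifs with h <;> simp only [decide_eq_true_iff, Fin.lt_def] at h <;>
    simp only [evenIdx, oddIdx] <;> omega

lemma val_orderedPairingPerm_oddIdx :
    (orderedPairingPerm α β (oddIdx i)).1 = max (2 * (α i).1) (2 * (β i).1 + 1) := by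
  rw [orderedPairingPerm, pairingPerm_oddIdx]
  split_ifs with h <;> simp only [decide_eq_true_iff, Fin.lt_def] at h <;>
    simp only [evenIdx, oddIdx] <;> omega

lemma orderedPairingPerm_mem_pfPerms_iff :
    orderedPairingPerm α β ∈ pfPerms μ ↔
      StrictMono fun i => min (2 * (α i).1) (2 * (β i).1 + 1) := by
  simp only [mem_pfPerms, Fin.lt_def, val_orderedPairingPerm_evenIdx,
    val_orderedPairingPerm_oddIdx, StrictMono]
  exact and_iff_right fun i => by omega

lemma orderedPairingPerm_parity_ne :
    (orderedPairingPerm α β (evenIdx i)).1 % 2 ≠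
      (orderedPairingPerm α β (oddIdx i)).1 % 2 := by
  rw [val_orderedPairingPerm_evenIdx, val_orderedPairingPerm_oddIdx]
  omega

end PairingPerm

lemma orderedPairingPerm_injective {α β α' β' : Perm (Fin μ)}
    (h : orderedPairingPerm α β = orderedPairingPerm α' β') : α = α' ∧ β = β' := by
  have hpair : ∀ i, α i = α' i ∧ β i = β' i := fun i => by
    have hmin := congrArg (fun σ => (σ (evenIdx i)).1) h
    have hmax := congrArg (fun σ => (σ (oddIdx i)).1) h
    simp only [val_orderedPairingPerm_evenIdx, val_orderedPairingPerm_oddIdx] at hmin hmax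
    exact ⟨Fin.ext (by omega), Fin.ext (by omega)⟩
  exact ⟨Equiv.ext fun i => (hpair i).1, Equiv.ext fun i => (hpair i).2⟩

def half (x : Fin (2 * μ)) : Fin μ := ⟨x.1 / 2, by omega⟩

/-- The member of parity `p` of the `i`-th pair of `σ`, when that pair has one of each parity. -/
def pairMember (σ : Perm (Fin (2 * μ))) (p : ℕ) (i : Fin μ) : Fin (2 * μ) :=
  if (σ (evenIdx i)).1 % 2 = p then σ (evenIdx i) else σ (oddIdx i)

lemma half_pairMember_injective {σ : Perm (Fin (2 * μ))}
    (hmix : ∀ i, (σ (evenIdx i)).1 % 2 ≠ (σ (oddIdx i)).1 % 2) {p : ℕ} (hp : p < 2) :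
    Function.Injective fun i => half (pairMember σ p i) := by
  have hpos : ∀ i, half (σ.symm (pairMember σ p i)) = i := fun i => by
    unfold pairMember
    split_ifs <;> ext <;> simp [half, evenIdx, oddIdx]; omega
  have hpar : ∀ i, (pairMember σ p i).1 % 2 = p := fun i => by
    have := hmix i
    unfold pairMember
    split_ifs <;> omega
  intro i j hij
  have hval := congrArg Fin.val hij
  simp only [half] at hval
  rw [← hpos i, ← hpos j, Fin.ext (by have := hpar i; have := hpar j; omega :
    (pairMember σ p i).1 = (pairMember σ p j).1)]

lemma exists_eq_orderedPairingPerm {σ : Perm (Fin (2 * μ))}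
    (hmix : ∀ i, (σ (evenIdx i)).1 % 2 ≠ (σ (oddIdx i)).1 % 2) (hσ : σ ∈ pfPerms μ) :
    ∃ α β : Perm (Fin μ), σ = orderedPairingPerm α β := by
  refine ⟨.ofBijective _ (half_pairMember_injective hmix zero_lt_two).bijective_of_finite,
    .ofBijective _ (half_pairMember_injective hmix one_lt_two).bijective_of_finite, ?_⟩
  ext x
  obtain ⟨i, rfl | rfl⟩ := evenIdx_or_oddIdx x <;>
  · have hlt := Fin.lt_def.mp ((mem_pfPerms.mp hσ).1 i)
    have := hmix i
    simp only [val_orderedPairingPerm_evenIdx, val_orderedPairingPerm_oddIdx,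
      ofBijective_apply, half, pairMember]
    split_ifs <;> omega

def pairMin (π : Perm (Fin μ)) (j : Fin μ) : ℕ := min (2 * j.1) (2 * (π j).1 + 1)

lemma pairMin_injective (π : Perm (Fin μ)) : Function.Injective (pairMin π) := by
  intro j k h
  have hπ : (π j).1 = (π k).1 → j.1 = k.1 := fun e =>
    congrArg Fin.val (π.injective (Fin.ext e))
  simp only [pairMin] at h
  exact Fin.ext (by omega)

/-- The element of `pfPerms μ` whose pairs are `{2 j, 2 π j + 1}`. -/
def matchingPerm (π : Perm (Fin μ)) : Perm (Fin (2 * μ)) :=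
  orderedPairingPerm (Tuple.sort (pairMin π)) ((Tuple.sort (pairMin π)).trans π)

lemma strictMono_pairMin_comp_iff {π α : Perm (Fin μ)} :
    StrictMono (pairMin π ∘ α) ↔ α = Tuple.sort (pairMin π) := by
  refine ⟨fun h => Tuple.eq_sort_iff.mpr ⟨h.monotone, fun i j hij he => absurd he (h hij).ne⟩,
    fun h => ?_⟩
  subst h
  exact (Tuple.monotone_sort _).strictMono_of_injective
    ((pairMin_injective π).comp (Equiv.injective _))

lemma matchingPerm_mem_pfPerms (π : Perm (Fin μ)) : matchingPerm π ∈ pfPerms μ :=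
  (orderedPairingPerm_mem_pfPerms_iff _ _).mpr (strictMono_pairMin_comp_iff.mpr rfl)

lemma matchingPerm_injective : Function.Injective (matchingPerm (μ := μ)) := by
  intro π π' h
  obtain ⟨hsort, htrans⟩ := orderedPairingPerm_injective h
  rw [hsort] at htrans
  exact mul_right_cancel (a := π) (b := Tuple.sort (pairMin π')) htrans

lemma exists_matchingPerm_eq {σ : Perm (Fin (2 * μ))} (hσ : σ ∈ pfPerms μ)
    (hmix : ∀ i, (σ (evenIdx i)).1 % 2 ≠ (σ (oddIdx i)).1 % 2) :
    ∃ π, matchingPerm π = σ := by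
  obtain ⟨α, β, rfl⟩ := exists_eq_orderedPairingPerm hmix hσ
  have hsort : α = Tuple.sort (pairMin (α.symm.trans β)) := by
    rw [← strictMono_pairMin_comp_iff]
    convert (orderedPairingPerm_mem_pfPerms_iff α β).mp hσ using 2 with i
    simp [pairMin]
  refine ⟨α.symm.trans β, ?_⟩
  rw [matchingPerm, ← hsort, ← Equiv.trans_assoc, Equiv.self_trans_symm, Equiv.refl_trans]

lemma sign_smul_prod_matchingPerm {R : Type*} [CommRing R]
    {A : Matrix (Fin (2 * μ)) (Fin (2 * μ)) R} (hA : Aᵀ = -A) (π : Perm (Fin μ)) :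
    Perm.sign (matchingPerm π) •
        ∏ i, A (matchingPerm π (evenIdx i)) (matchingPerm π (oddIdx i)) =
      Perm.sign π • ∏ j, A (evenIdx j) (oddIdx (π j)) := by
  rw [matchingPerm, orderedPairingPerm, sign_smul_prod_pairingPerm _ _ _ hA]
  congr 1
  · rw [Perm.sign_trans, mul_comm (Perm.sign π), ← mul_assoc, Int.units_mul_self, one_mul]
  · exact Equiv.prod_comp _ fun j => A (evenIdx j) (oddIdx (π j))

def evenOddBlock {R : Type*} (A : Matrix (Fin (2 * μ)) (Fin (2 * μ)) R) :
    Matrix (Fin μ) (Fin μ) R :=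
  Matrix.of fun i j => A (evenIdx i) (oddIdx j)

theorem pfaffian_eq_det_evenOddBlock {R : Type*} [CommRing R]
    {A : Matrix (Fin (2 * μ)) (Fin (2 * μ)) R} (hA : Aᵀ = -A)
    (hpar : ∀ x y : Fin (2 * μ), x.1 % 2 = y.1 % 2 → A x y = 0) :
    pfaffian A = (evenOddBlock A).det := by
  classical
  have hmixed : pfaffian A = ∑ σ ∈ pfPerms μ with
      ∀ i, (σ (evenIdx i)).1 % 2 ≠ (σ (oddIdx i)).1 % 2,
      Perm.sign σ • ∏ i, A (σ (evenIdx i)) (σ (oddIdx i)) := by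
    rw [pfaffian_eq_sum, Finset.sum_filter_of_ne]
    · rfl
    · intro σ _ hne i hi
      exact hne (by rw [Finset.prod_eq_zero (Finset.mem_univ i) (hpar _ _ hi),
        smul_zero])
  rw [hmixed, ← Matrix.det_transpose, Matrix.det_apply]
  symm
  refine Finset.sum_bij (fun π _ => matchingPerm π) (fun π _ => ?_)
    (fun π _ π' _ h => matchingPerm_injective h) (fun σ hσ => ?_) (fun π _ => ?_)
  · exact Finset.mem_filter.mpr ⟨matchingPerm_mem_pfPerms π,
      fun i => orderedPairingPerm_parity_ne _ _ i⟩
  · obtain ⟨hσ, hmix⟩ := Finset.mem_filter.mp hσ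
    obtain ⟨π, hπ⟩ := exists_matchingPerm_eq hσ hmix
    exact ⟨π, Finset.mem_univ π, hπ⟩
  · exact (sign_smul_prod_matchingPerm hA π).symm

end Pfaffian

section LeSignMatrix

variable (R : Type*) [CommRing R] (n : ℕ)

def leSignMatrix : Matrix (Fin n) (Fin n) R := Matrix.of fun i j => if i ≤ j then 1 else -1

def colDiff : Matrix (Fin n) (Fin n) R :=
  Matrix.of fun k l => if k = l then 1 else if k.1 + 1 = l.1 then -1 else 0

variable {R n}

lemma det_colDiff : (colDiff R n).det = 1 := by
  rw [Matrix.det_of_isUpperTriangular fun i j (h : j < i) => ?_]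
  · simp [colDiff]
  · have := Fin.lt_def.mp h
    simp only [colDiff, Matrix.of_apply]
    rw [if_neg (by omega), if_neg (by omega)]

lemma mul_colDiff_apply (M : Matrix (Fin n) (Fin n) R) (k l : Fin n) :
    (M * colDiff R n) k l = M k l - if h : 0 < l.1 then M k ⟨l.1 - 1, by omega⟩ else 0 := by
  simp only [Matrix.mul_apply, colDiff, Matrix.of_apply, mul_ite, mul_one, mul_neg, mul_zero]
  split_ifs with hl
  · rw [Fintype.sum_eq_add l ⟨l.1 - 1, by omega⟩ (fun h => by simp [Fin.ext_iff] at h; omega)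
      fun m hm => by rw [if_neg hm.1, if_neg fun h => hm.2 (by ext; simp; omega)]]
    rw [if_pos rfl, if_neg (by simp [Fin.ext_iff]; omega), if_pos (by simp; omega),
      sub_eq_add_neg]
  · rw [Fintype.sum_eq_single l fun m hm => by rw [if_neg hm, if_neg (by omega)], if_pos rfl,
      sub_zero]

lemma det_leSignMatrix : (leSignMatrix R n).det = 2 ^ (n - 1) := by
  have hlower : (leSignMatrix R n * colDiff R n).BlockTriangular OrderDual.toDual := by
    intro k l (h : k < l)
    have := Fin.lt_def.mp h
    rw [mul_colDiff_apply, dif_pos (by omega)]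
    simp only [leSignMatrix, Matrix.of_apply, Fin.le_def]
    rw [if_pos (by omega), if_pos (by omega), sub_self]
  have hdiag : ∀ k : Fin n, (leSignMatrix R n * colDiff R n) k k = if k.1 = 0 then 1 else 2 := by
    intro k
    rw [mul_colDiff_apply]
    simp only [leSignMatrix, Matrix.of_apply, Fin.le_def]
    split_ifs <;> first | omega | norm_num
  rw [← mul_one (leSignMatrix R n).det, ← det_colDiff, ← Matrix.det_mul,
    Matrix.det_of_isLowerTriangular _ hlower]
  simp_rw [hdiag]
  rcases n with _ | n
  · simp
  · rw [Fin.prod_univ_succ]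
    simp

end LeSignMatrix

section Checkerboard

open Pfaffian
open scoped Matrix

variable {μ : ℕ}

lemma checkerboard_transpose : (checkerboard μ)ᵀ = -checkerboard μ := by
  ext x y
  simp only [Matrix.transpose_apply, Matrix.neg_apply, checkerboard, add_comm y.1, Nat.odd_iff]
  split_ifs <;> first | rfl | omega

lemma checkerboard_of_mod_two_eq {x y : Fin (2 * μ)} (h : x.1 % 2 = y.1 % 2) :
    checkerboard μ x y = 0 :=
  if_neg (by rw [Nat.odd_iff]; omega)

lemma evenOddBlock_checkerboard :
    evenOddBlock (checkerboard μ) = leSignMatrix ℤ μ := by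
  ext i j
  simp only [evenOddBlock, leSignMatrix, Matrix.of_apply, checkerboard, evenIdx, oddIdx,
    Fin.le_def, Nat.odd_iff]
  split_ifs <;> first | rfl | omega

end Checkerboard

theorem pfaffian_checkerboard_general (μ : ℕ) :
    pfaffian (checkerboard μ) = 2 ^ (μ - 1) := by
  rw [Pfaffian.pfaffian_eq_det_evenOddBlock checkerboard_transpose
    fun _ _ => checkerboard_of_mod_two_eq, evenOddBlock_checkerboard, det_leSignMatrix]

/-- The Pfaffian of the `2μ × 2μ` checkerboard matrix equals `2^(μ−1)` for every `μ ≥ 1`. -/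
theorem pfaffian_checkerboard (μ : ℕ) (hμ : 1 ≤ μ) :
    pfaffian (checkerboard μ) = 2 ^ (μ - 1) :=
  pfaffian_checkerboard_general μ
end

section
/- The determinant of the 2μ×2μ checkerboard matrix A with A_{ij} = sign(j−i) for j−i odd and A_{ij} = 0 for j−i even equals 4^{μ−1} for every μ ≥ 1. -/
open Matrix Equiv

/-- Interleaving equivalence: `inl a ↦ 2a`, `inr a ↦ 2a+1`. -/
def interleave (μ : ℕ) : Fin μ ⊕ Fin μ ≃ Fin (2*μ) where
  toFun := Sum.elim (fun a => ⟨2*a.1, by have := a.2; omega⟩)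
    (fun a => ⟨2*a.1+1, by have := a.2; omega⟩)
  invFun i := if i.1 % 2 = 0 then Sum.inl ⟨i.1/2, by have := i.2; omega⟩
    else Sum.inr ⟨i.1/2, by have := i.2; omega⟩
  left_inv := by
    rintro (⟨a, ha⟩ | ⟨a, ha⟩)
    · dsimp only [Sum.elim_inl]
      rw [if_pos (by omega)]
      simp only [Sum.inl.injEq, Fin.mk.injEq]
      omega
    · dsimp only [Sum.elim_inr]
      rw [if_neg (by omega)]
      simp only [Sum.inr.injEq, Fin.mk.injEq]
      omega
  right_inv := by
    rintro ⟨i, hi⟩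
    by_cases h : i % 2 = 0 <;> simp [h, Fin.ext_iff] <;> omega

def Bmat (μ : ℕ) : Matrix (Fin μ) (Fin μ) ℤ := fun a b => if a ≤ b then 1 else -1

def Cmat (μ : ℕ) : Matrix (Fin μ) (Fin μ) ℤ := fun a b => if a < b then 1 else -1

def Bred (m : ℕ) : Matrix (Fin (m+1)) (Fin (m+1)) ℤ :=
  fun i j => if (j : ℕ) = 0 then (if (i : ℕ) = 0 then 1 else -1)
    else if (i : ℕ) = (j : ℕ) then 2 else 0

lemma det_Bmat (m : ℕ) : (Bmat (m+1)).det = 2 ^ m := by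
  have key : (Bmat (m+1)).det = (Bred m).det := by
    apply Matrix.det_eq_of_forall_col_eq_smul_add_pred (fun _ => (1 : ℤ))
    · intro i
      simp [Bmat, Bred, Fin.le_def, Nat.le_zero]
    · intro i j
      simp only [Bmat, Bred, Fin.le_def, Fin.val_succ, Fin.coe_castSucc]
      split_ifs <;> try omega
      all_goals exact ‹False›.elim
  rw [key]
  rw [Matrix.det_of_lowerTriangular _ (by
    intro i j hij
    have hij' : (i : ℕ) < (j : ℕ) := hij
    simp only [Bred]
    rw [if_neg (by omega), if_neg (by omega)])]
  have h0 : Bred m 0 0 = 1 := by simp [Bred]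
  have hd : ∀ i : Fin m, Bred m i.succ i.succ = 2 := by
    intro i; simp [Bred]
  rw [Fin.prod_univ_succ, h0, one_mul, Finset.prod_congr rfl (fun i _ => hd i),
    Finset.prod_const]
  simp

lemma Cmat_eq (μ : ℕ) : Cmat μ = -(Bmat μ)ᵀ := by
  ext a b
  simp only [Cmat, Bmat, Matrix.neg_apply, Matrix.transpose_apply, Fin.lt_def, Fin.le_def]
  split_ifs <;> omega

lemma det_Cmat (m : ℕ) : (Cmat (m+1)).det = (-1)^(m+1) * 2 ^ m := by
  rw [Cmat_eq, Matrix.det_neg, Matrix.det_transpose, det_Bmat]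
  simp

lemma sign_sumComm (μ : ℕ) :
    (Equiv.Perm.sign (Equiv.sumComm (Fin μ) (Fin μ)) : ℤ) = (-1) ^ μ := by
  have h : Equiv.Perm.sign
      (Equiv.prodCongrLeft (fun _ : Fin μ => Equiv.swap false true) : Equiv.Perm (Bool × Fin μ))
      = Equiv.Perm.sign (Equiv.sumComm (Fin μ) (Fin μ)) := by
    apply Equiv.Perm.sign_eq_sign_of_equiv _ _ (Equiv.boolProdEquivSum (Fin μ))
    rintro ⟨b, a⟩
    cases b <;> rfl
  rw [← h, Equiv.Perm.sign_prodCongrLeft]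
  simp [Equiv.Perm.sign_swap]

/-- The determinant of the `2μ × 2μ` checkerboard matrix equals `4^(μ−1)` for every `μ ≥ 1`. -/
theorem det_checkerboard (μ : ℕ) (hμ : 1 ≤ μ) :
    (checkerboard μ).det = 4 ^ (μ - 1) := by
  obtain ⟨m, rfl⟩ : ∃ m, μ = m + 1 := ⟨μ - 1, by omega⟩
  have h1 : ((checkerboard (m+1)).submatrix (interleave (m+1)) (interleave (m+1))).det
      = (checkerboard (m+1)).det := Matrix.det_submatrix_equiv_self _ _
  have h2 : (checkerboard (m+1)).submatrix (interleave (m+1)) (interleave (m+1))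
      = (Matrix.fromBlocks (Cmat (m+1)) 0 0 (Bmat (m+1))).submatrix
          (Equiv.sumComm (Fin (m+1)) (Fin (m+1))) id := by
    ext i j
    rcases i with a | a <;> rcases j with b | b <;>
      · simp only [Matrix.submatrix_apply, interleave, Equiv.coe_fn_mk, Sum.elim_inl,
          Sum.elim_inr, checkerboard, Equiv.sumComm_apply, Sum.swap_inl, Sum.swap_inr, id_eq,
          Matrix.fromBlocks_apply₁₁, Matrix.fromBlocks_apply₁₂, Matrix.fromBlocks_apply₂₁,
          Matrix.fromBlocks_apply₂₂, Bmat, Cmat, Matrix.zero_apply, Fin.le_def, Fin.lt_def,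
          Nat.odd_iff]
        split_ifs <;> omega
  rw [← h1, h2, Matrix.det_permute, Matrix.det_fromBlocks_zero₂₁, det_Bmat, det_Cmat,
    sign_sumComm]
  have h3 : ((-1:ℤ))^(m+1) * ((-1)^(m+1) * 2^m * 2^m) = 4^m := by
    have h4 : ((-1:ℤ))^(m+1) * (-1:ℤ)^(m+1) = 1 := by rw [← mul_pow]; norm_num
    calc ((-1:ℤ))^(m+1) * ((-1)^(m+1) * 2^m * 2^m)
        = ((-1:ℤ))^(m+1) * (-1:ℤ)^(m+1) * (2^m * 2^m) := by ring
      _ = 2^m * 2^m := by rw [h4, one_mul]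
      _ = 4^m := by rw [← mul_pow]; norm_num
  rw [Int.cast_id, h3]
  norm_num
end

section
/- In characteristic 2, every linear map preserving the standard non-degenerate quadratic form q = x₁y₁ + ⋯ + x_ν y_ν on k^{2ν} has determinant 1. -/
open MvPolynomial Matrix

/-- The standard quadratic form `x₁y₁ + ⋯ + x_ν y_ν (+ z²)` on `n`-space. -/
def stdQ (F : Type*) [CommRing F] (n : ℕ) (v : Fin n → F) : F :=
  (∑ r : Fin (n/2), v ⟨2*r.1, by have := r.2; omega⟩ * v ⟨2*r.1+1, by have := r.2; omega⟩)
  + if h : n % 2 = 1 then (v ⟨n-1, by omega⟩)^2 else 0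

/-- Extension of a vector on `Fin n` to `ℕ` by zero. -/
def ext0 {F : Type*} [Zero F] {n : ℕ} (v : Fin n → F) : ℕ → F :=
  fun i => if h : i < n then v ⟨i, h⟩ else 0

lemma ext0_add {F : Type*} [AddZeroClass F] {n : ℕ} (u v : Fin n → F) (i : ℕ) :
    ext0 (u + v) i = ext0 u i + ext0 v i := by
  unfold ext0; split <;> simp

/-- The pairing involution on indices. -/
def pair (i : ℕ) : ℕ := if i % 2 = 0 then i + 1 else i - 1

lemma pair_pair {i : ℕ} : pair (pair i) = i := by
  unfold pair
  rcases Nat.even_or_odd i with h | h <;> [skip; skip] <;>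
    · simp only [Nat.even_iff, Nat.odd_iff] at h
      split <;> split <;> omega

lemma pair_lt {n i : ℕ} (hn : n % 2 = 0) (h : i < n) : pair i < n := by
  unfold pair; split <;> omega

lemma sum_pairs {M : Type*} [AddCommMonoid M] (ν : ℕ) (f : ℕ → M) :
    ∑ i ∈ Finset.range (2*ν), f i = ∑ r ∈ Finset.range ν, (f (2*r) + f (2*r+1)) := by
  induction ν with
  | zero => simp
  | succ n ih =>
    have h : 2 * (n+1) = (2*n + 1) + 1 := by ring
    rw [h, Finset.sum_range_succ, Finset.sum_range_succ, ih, Finset.sum_range_succ]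
    abel

lemma stdQ_even {F : Type*} [CommRing F] (ν : ℕ) (v : Fin (2*ν) → F) :
    stdQ F (2*ν) v = ∑ r ∈ Finset.range ν, ext0 v (2*r) * ext0 v (2*r+1) := by
  unfold stdQ
  rw [dif_neg (by omega), add_zero]
  have h2 : (2*ν)/2 = ν := by omega
  have key : ∀ r : Fin ((2*ν)/2),
      (v ⟨2*r.1, by have := r.2; omega⟩ * v ⟨2*r.1+1, by have := r.2; omega⟩)
        = ext0 v (2*r.1) * ext0 v (2*r.1+1) := by
    intro r
    have h1 : 2*r.1 < 2*ν := by have := r.2; omega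
    have h2' : 2*r.1 + 1 < 2*ν := by have := r.2; omega
    have h3 : r.1 < ν := by have := r.2; omega
    simp [ext0, h1, h2', h3]
  rw [Finset.sum_congr rfl (fun r _ => key r)]
  rw [Fin.sum_univ_eq_sum_range (fun i => ext0 v (2*i) * ext0 v (2*i+1)), h2]

/-- The polar bilinear form of `stdQ`. -/
def polarB {k : Type*} [CommRing k] (ν : ℕ) (u v : Fin (2*ν) → k) : k :=
  ∑ r ∈ Finset.range ν, (ext0 u (2*r) * ext0 v (2*r+1) + ext0 u (2*r+1) * ext0 v (2*r))

lemma polar_identity {k : Type*} [CommRing k] (ν : ℕ) (u v : Fin (2*ν) → k) :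
    stdQ k (2*ν) (u + v) = stdQ k (2*ν) u + stdQ k (2*ν) v + polarB ν u v := by
  simp only [stdQ_even, polarB, ← Finset.sum_add_distrib]
  refine Finset.sum_congr rfl fun r _ => ?_
  rw [ext0_add, ext0_add]
  ring

/-- The Gram matrix of the polar form: the pair-swap permutation matrix. -/
def Jmat (k : Type*) [CommRing k] (ν : ℕ) : Matrix (Fin (2*ν)) (Fin (2*ν)) k :=
  Matrix.of fun i j => if j.1 = pair i.1 then 1 else 0

lemma Jmat_mulVec {k : Type*} [CommRing k] (ν : ℕ) (v : Fin (2*ν) → k) (i : Fin (2*ν)) :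
    (Jmat k ν).mulVec v i = ext0 v (pair i.1) := by
  have hlt : pair i.1 < 2*ν := pair_lt (by omega) i.2
  rw [Matrix.mulVec, dotProduct]
  rw [Finset.sum_eq_single (⟨pair i.1, hlt⟩ : Fin (2*ν))]
  · simp [Jmat, ext0, dif_pos hlt]
  · intro b _ hb
    have : b.1 ≠ pair i.1 := fun h => hb (Fin.ext h)
    simp [Jmat, this]
  · simp

lemma dot_Jmat {k : Type*} [CommRing k] (ν : ℕ) (u v : Fin (2*ν) → k) :
    u ⬝ᵥ (Jmat k ν).mulVec v = polarB ν u v := by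
  rw [dotProduct]
  have step : ∀ i : Fin (2*ν), u i * (Jmat k ν).mulVec v i
      = ext0 u i.1 * ext0 v (pair i.1) := by
    intro i
    rw [Jmat_mulVec]
    simp [ext0, dif_pos i.2]
  rw [Finset.sum_congr rfl (fun i _ => step i)]
  rw [Fin.sum_univ_eq_sum_range (fun i => ext0 u i * ext0 v (pair i))]
  rw [sum_pairs]
  refine Finset.sum_congr rfl fun r _ => ?_
  have h1 : pair (2*r) = 2*r+1 := by unfold pair; simp [Nat.mul_mod_right]
  have h2 : pair (2*r+1) = 2*r := by
    unfold pair; have : (2*r+1) % 2 = 1 := by omega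
    simp [this]
  rw [h1, h2]

lemma Jmat_sq {k : Type*} [CommRing k] (ν : ℕ) : Jmat k ν * Jmat k ν = 1 := by
  ext i j
  rw [Matrix.mul_apply]
  have hlt : pair i.1 < 2*ν := pair_lt (by omega) i.2
  rw [Finset.sum_eq_single (⟨pair i.1, hlt⟩ : Fin (2*ν))]
  · by_cases h : j = i
    · subst h
      simp [Jmat, pair_pair, Matrix.one_apply]
    · have : j.1 ≠ pair (pair i.1) := by rw [pair_pair]; exact fun hh => h (Fin.ext hh)
      have h' : i ≠ j := fun hh => h hh.symm
      simp [Jmat, this, Matrix.one_apply, h']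
  · intro b _ hb
    have : b.1 ≠ pair i.1 := fun h => hb (Fin.ext h)
    simp [Jmat, this]
  · simp

/-- In characteristic 2, every linear automorphism of `k^{2ν}` preserving the standard
non-degenerate quadratic form `q = x₁y₁ + ⋯ + x_ν y_ν` has determinant 1. -/
theorem det_eq_one_of_preserves_stdQ
    (k : Type*) [Field k] [CharP k 2] (ν : ℕ)
    (g : Matrix (Fin (2*ν)) (Fin (2*ν)) k) (hg : IsUnit g.det)
    (hq : ∀ v : Fin (2*ν) → k, stdQ k (2*ν) (g.mulVec v) = stdQ k (2*ν) v) :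
    g.det = 1 := by
  -- g preserves the polar form
  have hB : ∀ u v : Fin (2*ν) → k, polarB ν (g.mulVec u) (g.mulVec v) = polarB ν u v := by
    intro u v
    have h1 := polar_identity ν (g.mulVec u) (g.mulVec v)
    rw [← Matrix.mulVec_add, hq (u + v), hq u, hq v, polar_identity ν u v] at h1
    exact (add_left_cancel h1).symm
  -- hence gᵀ * J * g = J
  have hmat : gᵀ * Jmat k ν * g = Jmat k ν := by
    ext i j
    have key := hB (Pi.single i 1) (Pi.single j 1)
    rw [← dot_Jmat, ← dot_Jmat] at key
    have lhs_eq : (g.mulVec (Pi.single i 1)) ⬝ᵥ (Jmat k ν).mulVec (g.mulVec (Pi.single j 1))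
        = Pi.single i 1 ⬝ᵥ (gᵀ * Jmat k ν * g).mulVec (Pi.single j 1) := by
      rw [← Matrix.mulVec_mulVec, ← Matrix.mulVec_mulVec,
        Matrix.dotProduct_mulVec (Pi.single i 1) gᵀ, Matrix.vecMul_transpose]
    rw [lhs_eq] at key
    have e1 : ∀ M : Matrix (Fin (2*ν)) (Fin (2*ν)) k,
        Pi.single i 1 ⬝ᵥ M.mulVec (Pi.single j 1) = M i j := by
      intro M
      rw [Matrix.mulVec_single, single_dotProduct]
      simp
    rw [e1, e1] at key
    exact key
  -- determinant bookkeeping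
  have hJ : IsUnit (Jmat k ν).det := Matrix.isUnit_det_of_left_inverse (Jmat_sq ν)
  have hdet := congrArg Matrix.det hmat
  rw [Matrix.det_mul, Matrix.det_mul, Matrix.det_transpose] at hdet
  have hsq : g.det * g.det = 1 := by
    have hJ0 : (Jmat k ν).det ≠ 0 := hJ.ne_zero
    have h' : (g.det * g.det) * (Jmat k ν).det = 1 * (Jmat k ν).det := by
      rw [one_mul]; linear_combination hdet
    exact mul_right_cancel₀ hJ0 h'
  rcases mul_self_eq_one_iff.mp hsq with h | h
  · exact h
  · rw [h, CharTwo.neg_eq]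
end

section
/- Let ν ≥ 1 and m ≥ 1. Every m-linear SO(2ν+1)-invariant polynomial over an algebraically closed field of characteristic 2 has multiplicity at least min(m, 2ν) in the x, y variables, i.e., every monomial has total degree at least min(m, 2ν) in the x and y coordinates. -/
/-!
A multilinear polynomial `p` is the multilinear form `∑_ρ c_ρ ∏ᵢ vᵢ (ρ i)` of its
coefficients, one for each choice `ρ` of a coordinate per vector. Suppose the monomial `ρ` of
`p` used fewer than `min m (2ν)` of the `x, y` coordinates. Then some vector `i₀` sits on the
`z`-axis, and some `x, y` coordinate `c` is used by no vector; let `c'` be the partner of `c`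
in its hyperbolic pair. The product of transvections `g_s = t_{z c}(s) t_{c' c}(s²)` fixes
every basis vector but `e_c`, which it sends to `e_c + s e_z + s² e_{c'}`; it preserves `q`
because the two contributions `s² v_c²` to `q (g_s v)` cancel in characteristic 2. Evaluating
the invariance of `p` under `g_s` at the basis vectors `e_{ρ i}`, with `e_c` in slot `i₀`,
gives `s c_ρ + s² c_ρ' = 0` for all `s`, where `ρ'` moves vector `i₀` to `c'`; hence
`c_ρ = 0` since `k` is infinite.
-/

open MvPolynomial

/-- The action of a matrix `g` on polynomials in the coordinates of `m` vectors,
substituting `v ↦ g v` in each vector variable. -/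
noncomputable def substAct {k : Type*} [CommSemiring k] {m n : ℕ}
    (g : Matrix (Fin n) (Fin n) k) :
    MvPolynomial (Fin m × Fin n) k →ₐ[k] MvPolynomial (Fin m × Fin n) k :=
  MvPolynomial.aeval fun ic => ∑ c : Fin n, MvPolynomial.C (g ic.2 c) * MvPolynomial.X (ic.1, c)


/-- `p` is `m`-linear: each monomial has degree exactly 1 in the variables of each vector. -/
def IsMultilinear {k : Type*} [CommSemiring k] {m n : ℕ}
    (p : MvPolynomial (Fin m × Fin n) k) : Prop :=
  ∀ d ∈ p.support, ∀ i : Fin m, (∑ c : Fin n, d (i, c)) = 1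


/-- Membership in the orthogonal group `O(n)`: an invertible matrix preserving `stdQ`. -/
def inO {k : Type*} [CommRing k] {n : ℕ} (g : Matrix (Fin n) (Fin n) k) : Prop :=
  IsUnit g.det ∧ ∀ v : Fin n → k, stdQ k n (g.mulVec v) = stdQ k n v


open Finset Matrix

lemma exists_mem_forall_ne_of_card_filter_lt {α β : Type*} [Fintype α] [DecidableEq β]
    {f : α → β} {s : Finset β} (h : #{a | f a ∈ s} < #s) :
    ∃ b ∈ s, ∀ a, f a ≠ b := by
  obtain ⟨b, hb, hbf⟩ := exists_mem_notMem_of_card_lt_card (card_image_le.trans_lt h)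
  exact ⟨b, hb, fun a hab => hbf (mem_image.2 ⟨a, by simp [hab, hb], hab⟩)⟩

lemma eq_zero_of_forall_mul_add_sq_mul_eq_zero {K : Type*} [CommRing K] [IsDomain K]
    [Infinite K] {a b : K} (h : ∀ s : K, s * a + s ^ 2 * b = 0) : a = 0 := by
  classical
  obtain ⟨t, ht⟩ := Infinite.exists_notMem_finset ({0, 1} : Finset K)
  rw [mem_insert, mem_singleton, not_or] at ht
  have hta : t * (1 - t) * a = 0 := by linear_combination h t - t ^ 2 * h 1
  exact (mul_eq_zero.1 hta).resolve_left (mul_ne_zero ht.1 (sub_ne_zero.2 (Ne.symm ht.2)))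

section MultilinearPolynomial

variable {k : Type*} [CommSemiring k] {m n : ℕ}

noncomputable def multilinearMonomial (ρ : Fin m → Fin n) : Fin m × Fin n →₀ ℕ :=
  Finsupp.equivFunOnFinite.symm fun ic => if ρ ic.1 = ic.2 then 1 else 0

@[simp]
lemma multilinearMonomial_apply (ρ : Fin m → Fin n) (ic : Fin m × Fin n) :
    multilinearMonomial ρ ic = if ρ ic.1 = ic.2 then 1 else 0 := rfl

lemma multilinearMonomial_injective :
    Function.Injective (multilinearMonomial : (Fin m → Fin n) → _) := fun ρ ρ' h => by
  funext i
  simpa using DFunLike.congr_fun h (i, ρ' i)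

lemma sum_sum_ite_multilinearMonomial (P : Fin n → Prop) [DecidablePred P]
    (ρ : Fin m → Fin n) :
    ∑ i, ∑ c, (if P c then multilinearMonomial ρ (i, c) else 0) = #{i | P (ρ i)} := by
  simp_rw [multilinearMonomial_apply, ← ite_and, and_comm (a := P _), ite_and, sum_ite_eq,
    if_pos (mem_univ _)]
  simp

lemma IsMultilinear.exists_eq_multilinearMonomial {p : MvPolynomial (Fin m × Fin n) k}
    (hp : IsMultilinear p) {d : Fin m × Fin n →₀ ℕ} (hd : d ∈ p.support) :
    ∃ ρ, d = multilinearMonomial ρ := by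
  have hrow (i : Fin m) :
      ∃ c, Finsupp.equivFunOnFinite.symm (fun c => d (i, c)) = .single c 1 :=
    (Finsupp.sum_eq_one_iff _).1 <| by rw [Finsupp.sum_fintype _ _ fun _ => rfl]; exact hp d hd i
  choose ρ hρ using hrow
  refine ⟨ρ, Finsupp.ext fun ⟨i, c⟩ => ?_⟩
  simpa [Finsupp.single_apply] using DFunLike.congr_fun (hρ i) c

lemma eval_monomial_multilinearMonomial (V : Fin m × Fin n → k) (ρ : Fin m → Fin n) (a : k) :
    eval V (monomial (multilinearMonomial ρ) a) = a * ∏ i, V (i, ρ i) := by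
  rw [eval_monomial, Finsupp.prod_fintype _ _ fun _ => pow_zero _, Fintype.prod_prod_type]
  simp [pow_ite]

noncomputable def multilinearForm (p : MvPolynomial (Fin m × Fin n) k) :
    MultilinearMap k (fun _ : Fin m => Fin n → k) k :=
  ∑ ρ : Fin m → Fin n, coeff (multilinearMonomial ρ) p •
    (MultilinearMap.mkPiAlgebra k (Fin m) k).compLinearMap fun i => LinearMap.proj (ρ i)

lemma multilinearForm_apply (p : MvPolynomial (Fin m × Fin n) k) (v : Fin m → Fin n → k) :
    multilinearForm p v =
      ∑ ρ : Fin m → Fin n, coeff (multilinearMonomial ρ) p * ∏ i, v i (ρ i) := by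
  simp [multilinearForm]

lemma multilinearForm_single (p : MvPolynomial (Fin m × Fin n) k) (ρ : Fin m → Fin n) :
    multilinearForm p (fun i => Pi.single (ρ i) 1) = coeff (multilinearMonomial ρ) p := by
  simp [multilinearForm_apply, Pi.single_apply, prod_boole, ← funext_iff]

lemma IsMultilinear.eval_eq_multilinearForm {p : MvPolynomial (Fin m × Fin n) k}
    (hp : IsMultilinear p) (v : Fin m → Fin n → k) :
    eval (fun ic => v ic.1 ic.2) p = multilinearForm p v := by
  classical
  have hsupp : p.support ⊆ univ.image multilinearMonomial := fun d hd => by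
    obtain ⟨ρ, rfl⟩ := hp.exists_eq_multilinearMonomial hd
    exact mem_image_of_mem _ (mem_univ ρ)
  conv_lhs => rw [p.as_sum, map_sum]
  rw [multilinearForm_apply, sum_subset hsupp fun d _ hd => by simp [notMem_support_iff.1 hd],
    sum_image fun ρ _ ρ' _ h => multilinearMonomial_injective h]
  simp only [eval_monomial_multilinearMonomial]

lemma eval_substAct (g : Matrix (Fin n) (Fin n) k) (v : Fin m → Fin n → k)
    (q : MvPolynomial (Fin m × Fin n) k) :
    eval (fun ic => v ic.1 ic.2) (substAct g q) = eval (fun ic => (g *ᵥ v ic.1) ic.2) q := by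
  rw [substAct, aeval_eq_bind₁, eval, eval₂Hom_bind₁]
  simp [Matrix.mulVec, dotProduct]

lemma IsMultilinear.multilinearForm_mulVec {p : MvPolynomial (Fin m × Fin n) k}
    (hp : IsMultilinear p) {g : Matrix (Fin n) (Fin n) k} (hg : substAct g p = p)
    (v : Fin m → Fin n → k) :
    multilinearForm p (fun i => g *ᵥ v i) = multilinearForm p v := by
  rw [← hp.eval_eq_multilinearForm, ← hp.eval_eq_multilinearForm, ← eval_substAct, hg]

end MultilinearPolynomial

section OrthogonalGroup

variable {F : Type*} [CommRing F]

lemma stdQ_add_single_of_lt {n : ℕ} (v : Fin n → F) {j j' : Fin n} (hj : j.1 < 2 * (n / 2))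
    (hjj' : j.1 / 2 = j'.1 / 2) (hne : j ≠ j') (a : F) :
    stdQ F n (v + Pi.single j a) = stdQ F n v + a * v j' := by
  have hne' : j.1 ≠ j'.1 := Fin.val_ne_of_ne hne
  have hj2 : j.1 / 2 < n / 2 := by omega
  have hr (r : Fin (n / 2)) : 2 * r.1 + 1 < n := by omega
  have hterm (r : Fin (n / 2)) :
      (v + Pi.single j a : Fin n → F) ⟨2 * r.1, by have := hr r; omega⟩ *
          (v + Pi.single j a : Fin n → F) ⟨2 * r.1 + 1, hr r⟩ =
        v ⟨2 * r.1, by have := hr r; omega⟩ * v ⟨2 * r.1 + 1, hr r⟩ +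
          if r = ⟨j.1 / 2, hj2⟩ then a * v j' else 0 := by
    simp only [Pi.add_apply, Pi.single_apply, Fin.ext_iff]
    split_ifs <;> first | omega | skip
    · rw [show j' = ⟨2 * r.1 + 1, hr r⟩ from Fin.ext (by dsimp only; omega)]; ring
    · rw [show j' = ⟨2 * r.1, by omega⟩ from Fin.ext (by dsimp only; omega)]; ring
    · ring
  have hlast (h : n % 2 = 1) :
      (v + Pi.single j a : Fin n → F) ⟨n - 1, by omega⟩ = v ⟨n - 1, by omega⟩ := by
    rw [Pi.add_apply, Pi.single_eq_of_ne (Fin.ne_of_val_ne (by dsimp only; omega)), add_zero]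
  simp only [stdQ, hterm, sum_add_distrib, sum_ite_eq', mem_univ, if_true]
  split_ifs with h
  · rw [hlast h]; ring
  · ring

lemma stdQ_add_single_last (ν : ℕ) (v : Fin (2 * ν + 1) → F) (a : F) :
    stdQ F (2 * ν + 1) (v + Pi.single (Fin.last (2 * ν)) a) =
      stdQ F (2 * ν + 1) v + 2 * a * v (Fin.last (2 * ν)) + a ^ 2 := by
  have hodd : (2 * ν + 1) % 2 = 1 := by omega
  have hlast : (⟨2 * ν + 1 - 1, by omega⟩ : Fin (2 * ν + 1)) = Fin.last (2 * ν) :=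
    Fin.ext (by simp)
  have hxy (i : Fin (2 * ν + 1)) (hi : i.1 < 2 * ν) :
      (v + Pi.single (Fin.last (2 * ν)) a : Fin (2 * ν + 1) → F) i = v i := by
    rw [Pi.add_apply, Pi.single_eq_of_ne (Fin.ne_of_val_ne (by rw [Fin.val_last]; omega)),
      add_zero]
  simp only [stdQ, dif_pos hodd, hlast]
  rw [sum_congr rfl fun r _ => by
    rw [hxy _ (by have := r.2; dsimp only; omega), hxy _ (by have := r.2; dsimp only; omega)],
    Pi.add_apply, Pi.single_eq_same]
  ring

lemma transvection_mulVec {n : ℕ} (i j : Fin n) (a : F) (v : Fin n → F) :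
    transvection i j a *ᵥ v = v + Pi.single i (a * v j) := by
  rw [transvection, add_mulVec, one_mulVec, single_mulVec]
  rfl

lemma transvection_mul_transvection_mulVec {n : ℕ} {i i' j : Fin n} (hi'j : i' ≠ j) (a b : F)
    (v : Fin n → F) :
    (transvection i j a * transvection i' j b) *ᵥ v =
      v + Pi.single i' (b * v j) + Pi.single i (a * v j) := by
  rw [← mulVec_mulVec, transvection_mulVec, transvection_mulVec, Pi.add_apply,
    Pi.single_eq_of_ne hi'j.symm, add_zero]

lemma inO_transvection_mul_transvection [CharP F 2] {ν : ℕ} {c c' : Fin (2 * ν + 1)}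
    (hc' : c'.1 < 2 * ν) (hcc' : c.1 / 2 = c'.1 / 2) (hne : c ≠ c') (s : F) :
    inO (transvection (Fin.last (2 * ν)) c s * transvection c' c (s ^ 2)) := by
  have hc : c ≠ Fin.last (2 * ν) := Fin.ne_of_val_ne (by rw [Fin.val_last]; omega)
  have hc'z : Fin.last (2 * ν) ≠ c' := Fin.ne_of_val_ne (by rw [Fin.val_last]; omega)
  refine ⟨?_, fun v => ?_⟩
  · rw [det_mul, det_transvection_of_ne _ _ hc.symm, det_transvection_of_ne _ _ hne.symm,
      mul_one]
    exact isUnit_one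
  rw [transvection_mul_transvection_mulVec hne.symm, stdQ_add_single_last,
    stdQ_add_single_of_lt v (by omega) hcc'.symm hne.symm, Pi.add_apply,
    Pi.single_eq_of_ne hc'z]
  linear_combination (s * v c * v (Fin.last (2 * ν)) + s ^ 2 * v c ^ 2) *
    (CharTwo.two_eq_zero : (2 : F) = 0)

end OrthogonalGroup

lemma IsMultilinear.mul_coeff_add_sq_mul_coeff_eq_zero {k : Type*} [CommRing k] [CharP k 2]
    {ν m : ℕ} {p : MvPolynomial (Fin m × Fin (2 * ν + 1)) k} (hp : IsMultilinear p)
    (hinv : ∀ g : Matrix (Fin (2 * ν + 1)) (Fin (2 * ν + 1)) k, inO g → substAct g p = p)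
    {ρ : Fin m → Fin (2 * ν + 1)} (i₀ : Fin m) {c c' : Fin (2 * ν + 1)} (hc' : c'.1 < 2 * ν)
    (hcc' : c.1 / 2 = c'.1 / 2) (hne : c ≠ c') (hρc : ∀ i, ρ i ≠ c) (s : k) :
    s * coeff (multilinearMonomial (Function.update ρ i₀ (Fin.last (2 * ν)))) p +
      s ^ 2 * coeff (multilinearMonomial (Function.update ρ i₀ c')) p = 0 := by
  set e : Fin (2 * ν + 1) → Fin (2 * ν + 1) → k := fun r => Pi.single r 1
  set g := transvection (Fin.last (2 * ν)) c s * transvection c' c (s ^ 2)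
  have hfix (r : Fin (2 * ν + 1)) (hr : r ≠ c) : g *ᵥ e r = e r := by
    simp [g, e, transvection_mul_transvection_mulVec hne.symm, Pi.single_eq_of_ne hr.symm]
  have hmove : g *ᵥ e c = e c + s ^ 2 • e c' + s • e (Fin.last (2 * ν)) := by
    simp [g, e, transvection_mul_transvection_mulVec hne.symm, ← Pi.single_smul']
  have hbasis (r : Fin (2 * ν + 1)) : multilinearForm p (Function.update (e ∘ ρ) i₀ (e r)) =
      coeff (multilinearMonomial (Function.update ρ i₀ r)) p := by
    rw [← Function.comp_update]
    exact multilinearForm_single p _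
  have hgv : (fun i => g *ᵥ (e ∘ Function.update ρ i₀ c) i) =
      Function.update (e ∘ ρ) i₀ (e c + s ^ 2 • e c' + s • e (Fin.last (2 * ν))) := by
    rw [Function.comp_update, ← hmove, ← Function.comp_def (g *ᵥ ·), Function.comp_update]
    congr 1
    funext i
    exact hfix _ (hρc i)
  have hrel := hp.multilinearForm_mulVec
    (hinv g (inO_transvection_mul_transvection hc' hcc' hne s)) (e ∘ Function.update ρ i₀ c)
  rw [hgv, Function.comp_update, MultilinearMap.map_update_add, MultilinearMap.map_update_add,
    MultilinearMap.map_update_smul, MultilinearMap.map_update_smul, hbasis, hbasis, hbasis] at hrel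
  linear_combination hrel

theorem multilinear_invariant_xy_multiplicity_general
    (k : Type*) [Field k] [IsAlgClosed k] [CharP k 2]
    (ν m : ℕ)
    (p : MvPolynomial (Fin m × Fin (2*ν+1)) k) (hlin : IsMultilinear p)
    (hinv : ∀ g : Matrix (Fin (2*ν+1)) (Fin (2*ν+1)) k, inO g → substAct g p = p) :
    ∀ d ∈ p.support,
      min m (2*ν) ≤ ∑ i : Fin m, ∑ c : Fin (2*ν+1), if c.1 < 2*ν then d (i, c) else 0 := by
  intro d hd
  obtain ⟨ρ, rfl⟩ := hlin.exists_eq_multilinearMonomial hd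
  rw [sum_sum_ite_multilinearMonomial]
  by_contra! hlt
  obtain ⟨hltm, hltν⟩ := lt_min_iff.1 hlt
  obtain ⟨i₀, -, hi₀⟩ := exists_mem_notMem_of_card_lt_card
    (s := {i | (ρ i).1 < 2 * ν}) (t := univ) (by simpa using hltm)
  have hρi₀ : ρ i₀ = Fin.last (2 * ν) :=
    Fin.last_le_iff.1 (by simpa [Fin.le_def] using hi₀)
  obtain ⟨c, hc, hρc⟩ := exists_mem_forall_ne_of_card_filter_lt (f := ρ)
    (s := {c : Fin (2 * ν + 1) | c.1 < 2 * ν}) (by simpa [Fin.card_filter_val_lt] using hltν)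
  rw [mem_filter] at hc
  -- `c'` is the partner of `c` in its hyperbolic pair `{2r, 2r + 1}`
  obtain ⟨c', hc', hcc', hne⟩ :
      ∃ c' : Fin (2 * ν + 1), c'.1 < 2 * ν ∧ c.1 / 2 = c'.1 / 2 ∧ c ≠ c' :=
    ⟨⟨2 * (c.1 / 2) + 1 - c.1 % 2, by omega⟩, by dsimp only; omega, by dsimp only; omega,
      Fin.ne_of_val_ne (by dsimp only; omega)⟩
  have hrel := hlin.mul_coeff_add_sq_mul_coeff_eq_zero hinv i₀ hc' hcc' hne hρc
  rw [← hρi₀, Function.update_eq_self] at hrel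
  exact mem_support_iff.1 hd (eq_zero_of_forall_mul_add_sq_mul_eq_zero hrel)

/-- For `ν ≥ 1`, every `m`-linear `SO(2ν+1)`-invariant polynomial over an algebraically
closed field of characteristic 2 has multiplicity at least `min m (2ν)` in the `x, y`
variables: every monomial has total degree at least `min m (2ν)` in the coordinates other
than `z` (the last coordinate). -/
theorem multilinear_invariant_xy_multiplicity
    (k : Type*) [Field k] [IsAlgClosed k] [CharP k 2]
    (ν m : ℕ) (hν : 1 ≤ ν) (hm : 1 ≤ m)
    (p : MvPolynomial (Fin m × Fin (2*ν+1)) k) (hlin : IsMultilinear p)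
    (hinv : ∀ g : Matrix (Fin (2*ν+1)) (Fin (2*ν+1)) k, inO g → substAct g p = p) :
    ∀ d ∈ p.support,
      min m (2*ν) ≤ ∑ i : Fin m, ∑ c : Fin (2*ν+1), if c.1 < 2*ν then d (i, c) else 0 :=
  multilinear_invariant_xy_multiplicity_general k ν m p hlin hinv
end

section
/- Let n ≥ 3 be odd and m ≥ n. The m-linear SO(n)-invariant equal to the sum of all m-linear monomials in the variables z⁽ⁱ⁾, x_r⁽ⁱ⁾, y_r⁽ⁱ⁾ in which for each r ≥ 1 the letters x_r, y_r occur a strictly positive even number of times in alternating order, and the z's fill the remaining (even number of) slots, is indecomposable in the invariant ring R^{SO(n)} over an algebraically closed field of characteristic 2. -/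
open MvPolynomial

/-- The exponent vector of the `m`-linear monomial in which vector `i` contributes
its coordinate `c i`. -/
noncomputable def expOf {m n : ℕ} (c : Fin m → Fin n) : (Fin m × Fin n) →₀ ℕ :=
  ∑ i : Fin m, Finsupp.single (i, c i) 1


/-- The number `m_r` of occurrences of letters from group `r` (the pair `x_r, y_r`,
coordinates `2r, 2r+1`; for `n` odd, group `n/2` is the letter `z`). -/
def cnt {m n : ℕ} (c : Fin m → Fin n) (r : ℕ) : ℕ :=
  (Finset.univ.filter fun i : Fin m => (c i).1 / 2 = r).card


/-- In the monomial encoded by `c`, the letters `x_r` (coordinate `2r`) and `y_r`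
(coordinate `2r+1`) occur in alternating order. -/
def Alt {m n : ℕ} (c : Fin m → Fin n) (r : ℕ) : Prop :=
  ∀ i j : Fin m, i < j → (c i).1 / 2 = r → (c j).1 / 2 = r →
    (∀ l : Fin m, i < l → l < j → (c l).1 / 2 ≠ r) → c i ≠ c j


/-!
The witness monomial `x₁⁽¹⁾y₁⁽²⁾⋯x_ν⁽²ᵛ⁻¹⁾y_ν⁽²ᵛ⁾z⁽²ᵛ⁺¹⁾⋯z⁽ᵐ⁾` occurs in the invariant with
coefficient 1 and has x,y-multiplicity exactly `n - 1 = 2ν`. Every squarefree monomial `M` in the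
support of an `O(n)`-invariant has x,y-multiplicity at least `min (deg M) (n - 1)`: if `M` contains
a `z` but misses some letter `u ∈ {x_r, y_r}`, the map `e_u ↦ e_u + a² e_{u'} + a e_z` (`u'` the
partner of `u`) lies in `O(n)` in characteristic 2 (it adds `a² v_u²` to `q` twice), and evaluating
the invariant at `tᵢ vᵢ` and comparing multilinear coefficients gives
`a · coeff M + a² · coeff M' = 0` for all `a`. Multiplicity is additive on products, so a squarefree
monomial of full degree `m > n - 1` in a product of two invariants of positive degree has
multiplicity `> n - 1`.
-/

open Finset
open scoped Matrix

section Exponents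

variable {m n : ℕ}

noncomputable def expOn (A : Finset (Fin m)) (c : Fin m → Fin n) : Fin m × Fin n →₀ ℕ :=
  ∑ i ∈ A, Finsupp.single (i, c i) 1

noncomputable def onesOn (A : Finset (Fin m)) : Fin m →₀ ℕ :=
  ∑ i ∈ A, Finsupp.single i 1

theorem expOn_apply (A : Finset (Fin m)) (c : Fin m → Fin n) (j : Fin m) (b : Fin n) :
    expOn A c (j, b) = if j ∈ A ∧ c j = b then 1 else 0 := by
  classical
  simp only [expOn, Finsupp.finsetSum_apply, Finsupp.single_apply, Prod.mk.injEq]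
  split_ifs with h
  · rw [sum_eq_single_of_mem j h.1 (fun i _ hij => if_neg fun h' => hij h'.1)]
    simp [h.2]
  · exact sum_eq_zero fun i hi => if_neg fun ⟨hij, hc⟩ => h (hij ▸ ⟨hi, hc⟩)

theorem onesOn_apply (A : Finset (Fin m)) (j : Fin m) :
    onesOn A j = if j ∈ A then 1 else 0 := by
  classical
  simp [onesOn, Finsupp.finsetSum_apply, Finsupp.single_apply]

theorem expOn_eq_expOn_iff {A : Finset (Fin m)} {c c' : Fin m → Fin n} :
    expOn A c = expOn A c' ↔ ∀ i ∈ A, c i = c' i := by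
  refine ⟨fun h i hi => ?_, fun h => sum_congr rfl fun i hi => by rw [h i hi]⟩
  have := congrArg (· (i, c i)) h
  simp only [expOn_apply, hi, true_and, if_true] at this
  by_contra hne
  rw [if_neg (Ne.symm hne)] at this
  exact one_ne_zero this

theorem expOn_prod {M : Type*} [CommMonoid M] (A : Finset (Fin m)) (c : Fin m → Fin n)
    (h : Fin m × Fin n → ℕ → M) (h_zero : ∀ x, h x 0 = 1)
    (h_add : ∀ x s t, h x (s + t) = h x s * h x t) :
    (expOn A c).prod h = ∏ i ∈ A, h (i, c i) 1 := by
  classical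
  rw [expOn, ← Finsupp.prod_finsetSum_index h_zero h_add]
  exact prod_congr rfl fun i _ => Finsupp.prod_single_index (h_zero _)

theorem mapDomain_fst_expOn (A : Finset (Fin m)) (c : Fin m → Fin n) :
    (expOn A c).mapDomain Prod.fst = onesOn A := by
  rw [expOn, Finsupp.mapDomain_finsetSum]
  simp [onesOn, Finsupp.mapDomain_single]

theorem sum_expOn_eq_card (A : Finset (Fin m)) (c : Fin m → Fin n) :
    ((expOn A c).sum fun _ t => t) = #A := by
  classical
  rw [expOn, ← Finsupp.sum_finsetSum_index (fun _ => rfl) (fun _ _ _ => rfl)]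
  simp

theorem mapDomain_fst_apply {α β : Type*} [Fintype α] [Fintype β] (e : α × β →₀ ℕ) (j : α) :
    e.mapDomain Prod.fst j = ∑ b, e (j, b) := by
  classical
  rw [Finsupp.mapDomain, Finsupp.sum_apply, Finsupp.sum_fintype _ _ (by simp),
    Fintype.sum_prod_type]
  simp [Finsupp.single_apply]

theorem exists_eq_expOn_of_mapDomain_fst_eq [NeZero n] {e : Fin m × Fin n →₀ ℕ}
    {A : Finset (Fin m)} (h : e.mapDomain Prod.fst = onesOn A) : ∃ c, e = expOn A c := by
  classical
  have hrow (j : Fin m) : ∑ b, e (j, b) = if j ∈ A then 1 else 0 := by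
    rw [← mapDomain_fst_apply, h, onesOn_apply]
  have hletter (j : Fin m) (hj : j ∈ A) : ∃ b, ∀ b', e (j, b') = if b' = b then 1 else 0 := by
    have hsum := hrow j
    rw [if_pos hj] at hsum
    obtain ⟨b, -, hb⟩ := exists_ne_zero_of_sum_ne_zero (hsum ▸ one_ne_zero)
    have hsplit := add_sum_erase univ (fun b' => e (j, b')) (mem_univ b)
    have hrest : ∑ b' ∈ univ.erase b, e (j, b') = 0 := by omega
    refine ⟨b, fun b' => ?_⟩
    split_ifs with hb'
    · subst hb'; omega
    · exact sum_eq_zero_iff.1 hrest b' (mem_erase.2 ⟨hb', mem_univ b'⟩)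
  choose c hc using hletter
  refine ⟨fun j => if hj : j ∈ A then c j hj else 0, ?_⟩
  ext ⟨j, b⟩
  rw [expOn_apply]
  by_cases hj : j ∈ A
  · simp only [hj, dif_pos, true_and, hc j hj b, eq_comm]
  · have hzero := hrow j
    rw [if_neg hj, sum_eq_zero_iff] at hzero
    simp [hj, hzero b (mem_univ b)]

theorem exists_subset_of_add_eq_expOn {A : Finset (Fin m)} {c : Fin m → Fin n}
    {e₁ e₂ : Fin m × Fin n →₀ ℕ} (h : e₁ + e₂ = expOn A c) :
    ∃ B ⊆ A, e₁ = expOn B c ∧ e₂ = expOn (A \ B) c := by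
  classical
  refine ⟨A.filter fun i => e₁ (i, c i) ≠ 0, filter_subset _ _, ?_⟩
  have hpt (x) : e₁ x + e₂ x = expOn A c x := by rw [← Finsupp.add_apply, h]
  constructor <;> ext ⟨j, b⟩ <;> have := hpt (j, b) <;> rw [expOn_apply] at this ⊢ <;>
    by_cases hjb : j ∈ A ∧ c j = b
  · obtain ⟨hj, rfl⟩ := hjb
    simp only [hj, mem_filter, true_and, and_true, if_true] at this ⊢
    split_ifs <;> omega
  · rw [if_neg hjb] at this
    rw [if_neg fun h => hjb ⟨(mem_filter.1 h.1).1, h.2⟩]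
    omega
  · obtain ⟨hj, rfl⟩ := hjb
    simp only [hj, mem_filter, mem_sdiff, true_and, and_true, if_true, not_not] at this ⊢
    split_ifs <;> omega
  · rw [if_neg hjb] at this
    rw [if_neg fun h => hjb ⟨(mem_sdiff.1 h.1).1, h.2⟩]
    omega

end Exponents

section SlotEval

variable {k : Type*} [CommSemiring k] {m n : ℕ}

/-- `slotEval v p` is `p` evaluated at the vectors `Xᵢ • vᵢ`; its coefficient of `∏ i ∈ A, Xᵢ`
is multilinear in `(vᵢ)_{i ∈ A}`. -/
noncomputable def slotEval (v : Fin m → Fin n → k) :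
    MvPolynomial (Fin m × Fin n) k →ₐ[k] MvPolynomial (Fin m) k :=
  aeval fun ic => C (v ic.1 ic.2) * X ic.1

theorem slotEval_monomial (v : Fin m → Fin n → k) (e : Fin m × Fin n →₀ ℕ) (b : k) :
    slotEval v (monomial e b) =
      monomial (e.mapDomain Prod.fst) (b * e.prod fun ic t => v ic.1 ic.2 ^ t) := by
  rw [slotEval, aeval_monomial, monomial_eq,
    Finsupp.prod_mapDomain_index (fun _ => pow_zero _) (fun _ _ _ => pow_add _ _ _),
    C_mul, mul_assoc, algebraMap_eq]
  congr 1
  simp only [Finsupp.prod, mul_pow, prod_mul_distrib, map_prod, C_pow]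

theorem slotEval_substAct (v : Fin m → Fin n → k) (g : Matrix (Fin n) (Fin n) k)
    (p : MvPolynomial (Fin m × Fin n) k) :
    slotEval v (substAct g p) = slotEval (fun i => g *ᵥ v i) p := by
  rw [← AlgHom.comp_apply]
  congr 1
  refine MvPolynomial.algHom_ext fun ic => ?_
  simp [slotEval, substAct, Matrix.mulVec, dotProduct, sum_mul, mul_assoc]

theorem coeff_onesOn_slotEval (v : Fin m → Fin n → k) (A : Finset (Fin m))
    (p : MvPolynomial (Fin m × Fin n) k) :
    coeff (onesOn A) (slotEval v p) = ∑ e ∈ p.support,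
      if e.mapDomain Prod.fst = onesOn A then
        coeff e p * e.prod fun ic t => v ic.1 ic.2 ^ t else 0 := by
  conv_lhs => rw [p.as_sum, map_sum, coeff_sum]
  exact sum_congr rfl fun e _ => by rw [slotEval_monomial, coeff_monomial]

theorem sum_support_coeff_mul_ite (p : MvPolynomial (Fin m × Fin n) k) (E : Fin m × Fin n →₀ ℕ) :
    ∑ e ∈ p.support, coeff e p * (if e = E then 1 else 0) = coeff E p := by
  simp only [mul_ite, mul_one, mul_zero, sum_ite_eq', mem_support_iff]
  by_cases h : coeff E p = 0 <;> simp [h]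

theorem prod_eq_sum_ite_expOn_update {A : Finset (Fin m)} {i₀ : Fin m}
    (hi₀ : i₀ ∈ A) (c c' : Fin m → Fin n) {v : Fin m → Fin n → k}
    (hv : ∀ i ∈ A, i ≠ i₀ → v i = Pi.single (c i) 1) :
    ∏ i ∈ A, v i (c' i) =
      ∑ b, v i₀ b * if expOn A c' = expOn A (Function.update c i₀ b) then 1 else 0 := by
  have hiff (b : Fin n) : expOn A c' = expOn A (Function.update c i₀ b) ↔
      b = c' i₀ ∧ ∀ i ∈ A.erase i₀, c' i = c i := by
    rw [expOn_eq_expOn_iff]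
    constructor
    · intro h
      refine ⟨by simpa using (h i₀ hi₀).symm, fun i hi => ?_⟩
      rw [h i (mem_of_mem_erase hi), Function.update_of_ne (ne_of_mem_erase hi)]
    · rintro ⟨rfl, h⟩ i hi
      rcases eq_or_ne i i₀ with rfl | hne
      · simp
      · rw [Function.update_of_ne hne, h i (mem_erase.2 ⟨hne, hi⟩)]
  simp only [hiff, ite_and, mul_ite, mul_one, mul_zero]
  rw [← mul_prod_erase A _ hi₀, sum_ite_eq' univ, if_pos (mem_univ _),
    prod_congr rfl fun i hi => by
      rw [hv i (mem_of_mem_erase hi) (ne_of_mem_erase hi), Pi.single_apply],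
    prod_boole, mul_ite, mul_one, mul_zero]
  congr 1

theorem coeff_onesOn_slotEval_eq_sum [NeZero n] {A : Finset (Fin m)} {i₀ : Fin m}
    (hi₀ : i₀ ∈ A) (c : Fin m → Fin n) {v : Fin m → Fin n → k}
    (hv : ∀ i ∈ A, i ≠ i₀ → v i = Pi.single (c i) 1) (p : MvPolynomial (Fin m × Fin n) k) :
    coeff (onesOn A) (slotEval v p) =
      ∑ b, v i₀ b * coeff (expOn A (Function.update c i₀ b)) p := by
  have hterm (e : Fin m × Fin n →₀ ℕ) :
      (if e.mapDomain Prod.fst = onesOn A then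
        coeff e p * e.prod fun ic t => v ic.1 ic.2 ^ t else 0) =
      ∑ b, v i₀ b * (coeff e p * if e = expOn A (Function.update c i₀ b) then 1 else 0) := by
    simp only [mul_left_comm (v i₀ _), ← mul_sum]
    by_cases he : e.mapDomain Prod.fst = onesOn A
    · obtain ⟨c', rfl⟩ := exists_eq_expOn_of_mapDomain_fst_eq he
      rw [if_pos he, expOn_prod _ _ _ (fun _ => pow_zero _) (fun _ _ _ => pow_add _ _ _)]
      simp only [pow_one, prod_eq_sum_ite_expOn_update hi₀ c c' hv]
    · rw [if_neg he, sum_eq_zero fun b _ => ?_, mul_zero]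
      rw [if_neg fun h => he (by rw [h, mapDomain_fst_expOn]), mul_zero]
  rw [coeff_onesOn_slotEval, sum_congr rfl fun e _ => hterm e, sum_comm]
  simp only [← mul_sum, sum_support_coeff_mul_ite]

end SlotEval

section Transvection

variable {k : Type*} [CommRing k] {n : ℕ}

def mixMat (a : k) (u w z : Fin n) : Matrix (Fin n) (Fin n) k :=
  1 + Matrix.single w u (a ^ 2) + Matrix.single z u a

theorem mixMat_mulVec_apply (a : k) (u w z : Fin n) (v : Fin n → k) (j : Fin n) :
    (mixMat a u w z *ᵥ v) j =
      v j + (if j = w then a ^ 2 * v u else 0) + (if j = z then a * v u else 0) := by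
  simp [mixMat, Matrix.add_mulVec, Matrix.single_mulVec, Function.update_apply]

theorem mixMat_mulVec_single_of_ne (a : k) {u j : Fin n} (w z : Fin n) (hj : j ≠ u) :
    mixMat a u w z *ᵥ Pi.single j 1 = Pi.single j 1 := by
  ext i
  simp [mixMat_mulVec_apply, Pi.single_apply, Ne.symm hj]

theorem sum_mixMat_mulVec_single_mul (a : k) (u w z : Fin n) (F : Fin n → k) :
    ∑ b, (mixMat a u w z *ᵥ Pi.single u 1) b * F b = F u + a ^ 2 * F w + a * F z := by
  simp [mixMat_mulVec_apply, add_mul, sum_add_distrib, Pi.single_apply, ite_mul]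

theorem isUnit_det_mixMat (a : k) {u w z : Fin n} (huw : u ≠ w) (huz : u ≠ z) :
    IsUnit (mixMat a u w z).det := by
  set N := Matrix.single w u (a ^ 2) + Matrix.single z u a
  have hNN : N * N = 0 := by
    simp only [N, add_mul, mul_add, Matrix.single_mul_single_of_ne _ _ _ _ huw,
      Matrix.single_mul_single_of_ne _ _ _ _ huz, add_zero]
  refine Matrix.isUnit_det_of_left_inverse (B := 1 - N) ?_
  rw [mixMat, add_assoc, sub_mul, one_mul, mul_add, mul_one, hNN, add_zero, add_sub_cancel_right]

variable [CharP k 2]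

theorem stdQ_mixMat_mulVec (hodd : n % 2 = 1) (a : k) {u w z : Fin n} (hz : z.1 = n - 1)
    (hu : u.1 < n - 1) (hw : w.1 / 2 = u.1 / 2) (huw : u ≠ w) (v : Fin n → k) :
    stdQ k n (mixMat a u w z *ᵥ v) = stdQ k n v := by
  have hwz : w ≠ z := fun h => by rw [Fin.ext_iff] at h; omega
  have huz : u ≠ z := fun h => by rw [Fin.ext_iff] at h; omega
  have hV := mixMat_mulVec_apply a u w z v
  set V := mixMat a u w z *ᵥ v
  have hVu : V u = v u := by simp [hV, huw, huz]
  have hVw : V w = v w + a ^ 2 * v u := by simp [hV, hwz]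
  have hVz : V z = v z + a * v u := by simp [hV, hwz.symm]
  let r₀ : Fin (n / 2) := ⟨u.1 / 2, by omega⟩
  have hpair (r : Fin (n / 2)) :
      V ⟨2 * r.1, by omega⟩ * V ⟨2 * r.1 + 1, by omega⟩ =
        v ⟨2 * r.1, by omega⟩ * v ⟨2 * r.1 + 1, by omega⟩ +
          if r = r₀ then a ^ 2 * v u ^ 2 else 0 := by
    split_ifs with hr
    · have hr' : r.1 = u.1 / 2 := by rw [hr]
      obtain ⟨h₁, h₂⟩ | ⟨h₁, h₂⟩ :
          ((⟨2 * r.1, by omega⟩ : Fin n) = u ∧ (⟨2 * r.1 + 1, by omega⟩ : Fin n) = w) ∨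
          ((⟨2 * r.1, by omega⟩ : Fin n) = w ∧ (⟨2 * r.1 + 1, by omega⟩ : Fin n) = u) := by
        simp only [Fin.ext_iff]
        have : u.1 ≠ w.1 := fun h => huw (Fin.ext h)
        omega
      all_goals rw [h₁, h₂, hVu, hVw]; ring
    · have hr' : r.1 ≠ u.1 / 2 := fun h => hr (Fin.ext h)
      simp only [V, hV, Fin.ext_iff]
      rw [if_neg (by omega), if_neg (by omega), if_neg (by omega), if_neg (by omega)]
      ring
  rw [stdQ, stdQ, dif_pos hodd, dif_pos hodd, sum_congr rfl fun r _ => hpair r,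
    sum_add_distrib, sum_ite_eq', if_pos (mem_univ _),
    show (⟨n - 1, by omega⟩ : Fin n) = z from Fin.ext hz.symm, hVz]
  linear_combination (a ^ 2 * v u ^ 2 + a * v z * v u) * CharTwo.two_eq_zero (R := k)

theorem mixMat_inO (hodd : n % 2 = 1) (a : k) {u w z : Fin n} (hz : z.1 = n - 1)
    (hu : u.1 < n - 1) (hw : w.1 / 2 = u.1 / 2) (huw : u ≠ w) : inO (mixMat a u w z) :=
  ⟨isUnit_det_mixMat a huw fun h => by rw [Fin.ext_iff] at h; omega,
    stdQ_mixMat_mulVec hodd a hz hu hw huw⟩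

end Transvection

section LowMultiplicity

variable {k : Type*} [CommSemiring k] {m n : ℕ}

def xyMult (c : Fin m → Fin n) (A : Finset (Fin m)) : ℕ :=
  #(A.filter fun i => (c i).1 < n - 1)

theorem eq_empty_of_expOn_eq_zero {A : Finset (Fin m)} {c : Fin m → Fin n}
    (h : expOn A c = 0) : A = ∅ := by
  have hcard := sum_expOn_eq_card A c
  rwa [h, Finsupp.sum_zero_index, eq_comm, card_eq_zero] at hcard

theorem xyMult_eq_add_sdiff (c : Fin m → Fin n) {A B : Finset (Fin m)} (hBA : B ⊆ A) :
    xyMult c A = xyMult c B + xyMult c (A \ B) := by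
  rw [xyMult, xyMult, xyMult, ← card_sdiff_add_card_eq_card (filter_subset_filter _ hBA),
    add_comm]
  congr 2
  ext i
  simp only [mem_sdiff, mem_filter]
  tauto

def lowMultSubalgebra (c : Fin m → Fin n) (N : ℕ) (hc : xyMult c univ ≤ N) (hN₀ : 0 < N)
    (hN : N < m) :
    Subalgebra k (MvPolynomial (Fin m × Fin n) k) where
  carrier := {p | ∀ A, coeff (expOn A c) p ≠ 0 → min #A N ≤ xyMult c A ∧ A ≠ univ}
  algebraMap_mem' r A hA := by
    classical
    rw [algebraMap_eq, coeff_C] at hA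
    obtain rfl := eq_empty_of_expOn_eq_zero (of_not_not fun h => hA (if_neg (Ne.symm h)))
    refine ⟨by simp, (card_lt_iff_ne_univ _).1 ?_⟩
    rw [card_empty, Fintype.card_fin]
    omega
  add_mem' {p q} hp hq A hA := by
    rw [coeff_add] at hA
    by_cases hpA : coeff (expOn A c) p = 0
    · exact hq A fun hqA => hA (by rw [hpA, hqA, add_zero])
    · exact hp A hpA
  mul_mem' {p q} hp hq A hA := by
    classical
    rw [coeff_mul] at hA
    obtain ⟨⟨e₁, e₂⟩, he, hne⟩ := exists_ne_zero_of_sum_ne_zero hA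
    obtain ⟨B, hBA, rfl, rfl⟩ := exists_subset_of_add_eq_expOn (mem_antidiagonal.1 he)
    obtain ⟨hBmult, hBuniv⟩ := hp B (left_ne_zero_of_mul hne)
    obtain ⟨hCmult, hCuniv⟩ := hq (A \ B) (right_ne_zero_of_mul hne)
    have hmult := xyMult_eq_add_sdiff c hBA
    have hcard := card_sdiff_add_card_eq_card hBA
    have hB := (card_lt_iff_ne_univ B).2 hBuniv
    have hC := (card_lt_iff_ne_univ (A \ B)).2 hCuniv
    rw [Fintype.card_fin] at hB hC
    refine ⟨by omega, ?_⟩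
    rintro rfl
    rw [card_univ, Fintype.card_fin] at hcard
    omega

end LowMultiplicity

section Invariants

variable {k : Type*} [CommRing k] {m n : ℕ}

def IsOrthogonalInvariant (p : MvPolynomial (Fin m × Fin n) k) : Prop :=
  ∀ g : Matrix (Fin n) (Fin n) k, inO g → substAct g p = p

theorem exists_partner (u : Fin n) (hu : u.1 < n - 1) :
    ∃ w : Fin n, w.1 / 2 = u.1 / 2 ∧ u ≠ w := by
  rcases Nat.even_or_odd' u.1 with ⟨j, hj | hj⟩
  · exact ⟨⟨u.1 + 1, by omega⟩, by simp only; omega, fun h => by simp [Fin.ext_iff] at h⟩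
  · exact ⟨⟨u.1 - 1, by omega⟩, by simp only; omega,
      fun h => by rw [Fin.ext_iff] at h; simp only at h; omega⟩

variable [IsDomain k] [CharP k 2] [Infinite k]

theorem coeff_expOn_eq_zero_of_isOrthogonalInvariant (hodd : n % 2 = 1)
    {p : MvPolynomial (Fin m × Fin n) k} (hp : IsOrthogonalInvariant p)
    {A : Finset (Fin m)} {c : Fin m → Fin n} {i₀ : Fin m} (hi₀ : i₀ ∈ A)
    (hz : (c i₀).1 = n - 1) {u : Fin n} (hu : u.1 < n - 1) (hA : ∀ i ∈ A, c i ≠ u) :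
    coeff (expOn A c) p = 0 := by
  classical
  have : NeZero n := ⟨by omega⟩
  obtain ⟨w, hw, huw⟩ := exists_partner u hu
  have hrel (a : k) :
      a ^ 2 * coeff (expOn A (Function.update c i₀ w)) p + a * coeff (expOn A c) p = 0 := by
    let v : Fin m → Fin n → k := fun i => Pi.single (Function.update c i₀ u i) 1
    have hv (i) (_ : i ∈ A) (hi : i ≠ i₀) : v i = Pi.single (c i) 1 := by
      simp [v, Function.update_of_ne hi]
    have hgv (i) (hiA : i ∈ A) (hi : i ≠ i₀) :
        mixMat a u w (c i₀) *ᵥ v i = Pi.single (c i) 1 := by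
      rw [hv i hiA hi, mixMat_mulVec_single_of_ne a w _ (hA i hiA)]
    have key := congrArg (coeff (onesOn A) ∘ slotEval v) (hp _ (mixMat_inO hodd a hz hu hw huw))
    simp only [Function.comp_apply, slotEval_substAct,
      coeff_onesOn_slotEval_eq_sum hi₀ c hgv, coeff_onesOn_slotEval_eq_sum hi₀ c hv] at key
    simp only [v, Function.update_self, sum_mixMat_mulVec_single_mul, Function.update_eq_self,
      Pi.single_apply, ite_mul, one_mul, zero_mul, sum_ite_eq', mem_univ, if_true] at key
    linear_combination key
  obtain ⟨t, ht⟩ := Infinite.exists_notMem_finset ({0, 1} : Finset k)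
  have ht₀ : t ≠ 0 := fun h => ht (by simp [h])
  have ht₁ : 1 - t ≠ 0 := fun h => ht (by simp [← sub_eq_zero.1 h])
  have hvanish : t * (1 - t) * coeff (expOn A c) p = 0 := by
    linear_combination hrel t - t ^ 2 * hrel 1
  exact (mul_eq_zero.1 hvanish).resolve_left (mul_ne_zero ht₀ ht₁)

theorem min_card_le_xyMult (hodd : n % 2 = 1) {p : MvPolynomial (Fin m × Fin n) k}
    (hp : IsOrthogonalInvariant p) {A : Finset (Fin m)} {c : Fin m → Fin n}
    (h : coeff (expOn A c) p ≠ 0) : min #A (n - 1) ≤ xyMult c A := by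
  classical
  by_contra! hlt
  obtain ⟨i₀, hi₀, hz⟩ : ∃ i₀ ∈ A, ¬(c i₀).1 < n - 1 := by
    by_contra! hall
    rw [xyMult, filter_true_of_mem hall] at hlt
    omega
  obtain ⟨u, hu, hfree⟩ : ∃ u ∈ univ.filter fun u : Fin n => u.1 < n - 1,
      u ∉ (A.filter fun i => (c i).1 < n - 1).image c := by
    refine exists_mem_notMem_of_card_lt_card (card_image_le.trans_lt ?_)
    rw [Fin.card_filter_val_lt]
    exact lt_of_lt_of_le (lt_min_iff.1 hlt).2 (le_min (by omega) le_rfl)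
  rw [mem_filter] at hu
  refine h (coeff_expOn_eq_zero_of_isOrthogonalInvariant hodd hp hi₀ (by omega) hu.2 ?_)
  rintro i hi rfl
  exact hfree (mem_image_of_mem c (mem_filter.2 ⟨hi, hu.2⟩))

theorem mem_lowMultSubalgebra (hodd : n % 2 = 1) {c : Fin m → Fin n}
    (hc : xyMult c univ ≤ n - 1) (hN₀ : 0 < n - 1) (hN : n - 1 < m)
    {p : MvPolynomial (Fin m × Fin n) k} (hp : IsOrthogonalInvariant p)
    (hdeg : p.totalDegree < m) : p ∈ lowMultSubalgebra c (n - 1) hc hN₀ hN := by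
  refine fun A hA => ⟨min_card_le_xyMult hodd hp hA, ?_⟩
  rintro rfl
  have := le_totalDegree (mem_support_iff.2 hA)
  rw [sum_expOn_eq_card, card_univ, Fintype.card_fin] at this
  omega

end Invariants

section DiagonalMonomial

variable {k : Type*} [CommSemiring k] {m n : ℕ}

theorem coeff_expOf_sum_monomial (S : Finset (Fin m → Fin n)) {c : Fin m → Fin n} (hc : c ∈ S) :
    coeff (expOf c) (∑ c' ∈ S, monomial (expOf c') (1 : k)) = 1 := by
  classical
  have hexp (c' : Fin m → Fin n) : expOf c' = expOf c ↔ c' = c := by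
    change expOn univ c' = expOn univ c ↔ _
    simp [expOn_eq_expOn_iff, _root_.funext_iff]
  simp only [coeff_sum, coeff_monomial, hexp, sum_ite_eq', hc, if_true]

/-- The letters of the witness monomial `x₁y₁⋯x_νy_ν z⋯z`. -/
def diagLetters (hn : 0 < n) (i : Fin m) : Fin n := ⟨min i.1 (n - 1), by omega⟩

theorem xyMult_diagLetters_univ (hn : 0 < n) (hm : n ≤ m) :
    xyMult (diagLetters hn : Fin m → Fin n) univ = n - 1 := by
  have hfilter : (univ.filter fun i : Fin m => (diagLetters hn i : Fin n).1 < n - 1) =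
      univ.filter fun i : Fin m => i.1 < n - 1 :=
    filter_congr fun i _ => by simp only [diagLetters]; omega
  rw [xyMult, hfilter, Fin.card_filter_val_lt]
  omega

theorem diagLetters_pairs (hodd : n % 2 = 1) (hm : n ≤ m) {r : ℕ} (hr : r < n / 2) :
    Even (cnt (diagLetters (by omega) : Fin m → Fin n) r) ∧
      1 ≤ cnt (diagLetters (by omega) : Fin m → Fin n) r ∧
      Alt (diagLetters (by omega) : Fin m → Fin n) r := by
  have hcnt : cnt (diagLetters (by omega) : Fin m → Fin n) r = 2 := by
    have hpair : (univ.filter fun i : Fin m => (diagLetters (by omega) i : Fin n).1 / 2 = r) =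
        {⟨2 * r, by omega⟩, ⟨2 * r + 1, by omega⟩} := by
      ext i
      rw [mem_filter]
      simp only [diagLetters, mem_univ, true_and, mem_insert, mem_singleton, Fin.ext_iff]
      omega
    rw [cnt, hpair, card_pair (by simp [Fin.ext_iff])]
  refine ⟨hcnt ▸ even_two, by omega, fun i j hij hi hj _ heq => ?_⟩
  simp only [diagLetters, Fin.ext_iff] at hi hj heq
  exact absurd hij (by rw [Fin.lt_def]; omega)

end DiagonalMonomial

open Classical in
/-- For odd `n ≥ 3` and `m ≥ n`, the `m`-linear `SO(n)`-invariant given by the sum of all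
`m`-linear monomials in which, for each `r`, the letters `x_r, y_r` occur a strictly positive
even number of times in alternating order (the `z`'s filling the remaining slots) is
indecomposable in the invariant ring over an algebraically closed field `k` of
characteristic 2. -/
theorem gh_indecomposable_SO_odd
    (k : Type*) [Field k] [IsAlgClosed k] [CharP k 2]
    (n m : ℕ) (hn : Odd n) (hn3 : 3 ≤ n) (hm : n ≤ m) :
    (∑ c ∈ (Finset.univ.filter fun c : Fin m → Fin n =>
        ∀ r < n / 2, Even (cnt c r) ∧ 1 ≤ cnt c r ∧ Alt c r),
      MvPolynomial.monomial (expOf c) (1 : k)) ∉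
    Algebra.adjoin k {p : MvPolynomial (Fin m × Fin n) k |
      (∀ g : Matrix (Fin n) (Fin n) k, inO g → substAct g p = p) ∧
      p.totalDegree < m} := by
  intro hmem
  have hodd : n % 2 = 1 := Nat.odd_iff.1 hn
  have hc := (xyMult_diagLetters_univ (m := m) (by omega) hm).le
  refine (Algebra.adjoin_le (S := lowMultSubalgebra _ _ hc (by omega) (by omega)) ?_
    hmem univ ?_).2 rfl
  · rintro p ⟨hp, hdeg⟩
    exact mem_lowMultSubalgebra hodd hc _ _ hp hdeg
  change coeff (expOf _) _ ≠ 0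
  rw [coeff_expOf_sum_monomial]
  · exact one_ne_zero
  · exact mem_filter.2 ⟨mem_univ _, fun r hr => diagLetters_pairs hodd hm hr⟩
end
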